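/- arXiv:1407.3535 — 3 statements merged into one kernel-verified Lean document; each statement's English description precedes it below -/
import Mathlib

section
/- Let b, t ∈ [-1,1] (with b = ρ_tb, t = ρ_tc). If x ∈ [-1,1] satisfies x ≥ b·t + √(1 + b²t² − (b² + t²)), then b − x·t ≥ √(1-x²)·√(1-t²), i.e., the sufficient elimination condition b ≥ x·t + √(1-x²)·√(1-t²) holds. -/
theorem elimination_from_autocorrelation (b t x : ℝ)
    (hb : b ∈ Set.Icc (-1 : ℝ) 1) (ht : t ∈ Set.Icc (-1 : ℝ) 1)
    (hx : x ∈ Set.Icc (-1 : ℝ) 1)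
    (hpos : 0 ≤ b * t + Real.sqrt (1 + b ^ 2 * t ^ 2 - (b ^ 2 + t ^ 2)))
    (hbxt : 0 ≤ b - x * t)
    (hge : x ≥ b * t + Real.sqrt (1 + b ^ 2 * t ^ 2 - (b ^ 2 + t ^ 2))) :
    b - x * t ≥ Real.sqrt (1 - x ^ 2) * Real.sqrt (1 - t ^ 2) := by
  obtain ⟨hb1, hb2⟩ := hb
  obtain ⟨ht1, ht2⟩ := ht
  obtain ⟨hx1, hx2⟩ := hx
  set D := 1 + b ^ 2 * t ^ 2 - (b ^ 2 + t ^ 2) with hDdef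
  have hD : 0 ≤ D := by rw [hDdef]; nlinarith [mul_nonneg (by nlinarith : (0:ℝ) ≤ 1 - b ^ 2) (by nlinarith : (0:ℝ) ≤ 1 - t ^ 2)]
  have hs := Real.sqrt_nonneg D
  have hsq := Real.sq_sqrt hD
  have h2 : D ≤ (x - b * t) ^ 2 := by nlinarith [hsq]
  have key : (1 - x ^ 2) * (1 - t ^ 2) ≤ (b - x * t) ^ 2 := by rw [hDdef] at h2; nlinarith [h2]
  have hx2' : 0 ≤ 1 - x ^ 2 := by nlinarith
  calc Real.sqrt (1 - x ^ 2) * Real.sqrt (1 - t ^ 2)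
      = Real.sqrt ((1 - x ^ 2) * (1 - t ^ 2)) := (Real.sqrt_mul hx2' _).symm
    _ ≤ Real.sqrt ((b - x * t) ^ 2) := Real.sqrt_le_sqrt key
    _ = b - x * t := Real.sqrt_sq hbxt
end

section
/- Let a, th ∈ [-1,1] with a ≥ th, and let x ∈ [0,1] satisfy x ≥ th·a + √(1 + th²a² − (th² + a²)). Then x·a − √(1-x²)·√(1-a²) ≥ th. -/
theorem blur_preserves_threshold (a th x : ℝ)
    (ha : a ∈ Set.Icc (-1 : ℝ) 1) (hth : th ∈ Set.Icc (-1 : ℝ) 1)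
    (hath : a ≥ th) (hx : x ∈ Set.Icc (0 : ℝ) 1)
    (hxa : 0 ≤ x * a - th)
    (hge : x ≥ th * a + Real.sqrt (1 + th ^ 2 * a ^ 2 - (th ^ 2 + a ^ 2))) :
    x * a - Real.sqrt (1 - x ^ 2) * Real.sqrt (1 - a ^ 2) ≥ th := by
  obtain ⟨ha1, ha2⟩ := ha
  obtain ⟨ht1, ht2⟩ := hth
  obtain ⟨hx1, hx2⟩ := hx
  have h1 : (0:ℝ) ≤ 1 - x ^ 2 := by nlinarith
  have h2 : (0:ℝ) ≤ 1 - a ^ 2 := by nlinarith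
  have ht : (0:ℝ) ≤ 1 - th ^ 2 := by nlinarith
  have hv : (0:ℝ) ≤ 1 + th ^ 2 * a ^ 2 - (th ^ 2 + a ^ 2) := by nlinarith [mul_nonneg ht h2]
  have hs := Real.sq_sqrt hv
  have hsx := Real.sq_sqrt h1
  have hsa := Real.sq_sqrt h2
  have nx := Real.sqrt_nonneg (1 - x ^ 2)
  have na := Real.sqrt_nonneg (1 - a ^ 2)
  have nv := Real.sqrt_nonneg (1 + th ^ 2 * a ^ 2 - (th ^ 2 + a ^ 2))
  have hsq : (x - th * a) ^ 2 ≥ 1 + th ^ 2 * a ^ 2 - (th ^ 2 + a ^ 2) := by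
    nlinarith
  nlinarith [sq_nonneg (Real.sqrt (1 - x ^ 2) * Real.sqrt (1 - a ^ 2)),
    mul_nonneg nx na, sq_nonneg (x * a - th - Real.sqrt (1 - x ^ 2) * Real.sqrt (1 - a ^ 2)),
    sq_nonneg (x * a - th + Real.sqrt (1 - x ^ 2) * Real.sqrt (1 - a ^ 2))]
end

section
/- Let x, y, z be unit vectors in a real inner product space. Then ⟨x,z⟩ ≤ ⟨x,y⟩·⟨y,z⟩ + √(1-⟨x,y⟩²)·√(1-⟨y,z⟩²). -/
/-!
Writing `⟨u, v⟩ = cos ∠(u, v)` for unit vectors, the triangle inequality for angles gives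
`|∠(x, y) - ∠(y, z)| ≤ ∠(x, z) ≤ π`. Since `cos` is decreasing on `[0, π]`,
`⟨x, z⟩ ≤ cos (∠(x, y) - ∠(y, z))`, and expanding the cosine of a difference gives the bound,
with `sin ∠(u, v) = √(1 - ⟨u, v⟩²)` because angles lie in `[0, π]`.
-/

open Real

namespace InnerProductGeometry

variable {V : Type*} [NormedAddCommGroup V] [InnerProductSpace ℝ V]

theorem abs_angle_sub_angle_le_angle (x y z : V) : |angle x y - angle y z| ≤ angle x z := by
  rw [abs_sub_le_iff]
  constructor
  · linarith [angle_le_angle_add_angle x z y, angle_comm z y]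
  · linarith [angle_le_angle_add_angle y x z, angle_comm y x]

theorem cos_angle_le_cos_angle_sub_angle (x y z : V) :
    cos (angle x z) ≤ cos (angle x y - angle y z) := by
  rw [← cos_abs (angle x y - angle y z)]
  exact cos_le_cos_of_nonneg_of_le_pi (abs_nonneg _) (angle_le_pi x z)
    (abs_angle_sub_angle_le_angle x y z)

theorem sin_angle_eq_sqrt_one_sub_inner_sq {x y : V} (hx : ‖x‖ = 1) (hy : ‖y‖ = 1) :
    sin (angle x y) = √(1 - inner ℝ x y ^ 2) := by
  rw [inner_eq_cos_angle_of_norm_eq_one hx hy]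
  exact sin_eq_sqrt_one_sub_cos_sq (angle_nonneg x y) (angle_le_pi x y)

end InnerProductGeometry

open InnerProductGeometry in
theorem inner_transitive_upper {E : Type*} [NormedAddCommGroup E] [InnerProductSpace ℝ E]
    (x y z : E) (hx : ‖x‖ = 1) (hy : ‖y‖ = 1) (hz : ‖z‖ = 1) :
    (inner ℝ x z : ℝ) ≤ (inner ℝ x y : ℝ) * (inner ℝ y z : ℝ) +
      Real.sqrt (1 - (inner ℝ x y : ℝ) ^ 2) * Real.sqrt (1 - (inner ℝ y z : ℝ) ^ 2) := by
  rw [← sin_angle_eq_sqrt_one_sub_inner_sq hx hy, ← sin_angle_eq_sqrt_one_sub_inner_sq hy hz,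
    inner_eq_cos_angle_of_norm_eq_one hx hy, inner_eq_cos_angle_of_norm_eq_one hy hz,
    inner_eq_cos_angle_of_norm_eq_one hx hz, ← cos_sub]
  exact cos_angle_le_cos_angle_sub_angle x y z
end
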